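/- arXiv:1004.0524 — 6 statements merged into one kernel-verified Lean document; each statement's English description precedes it below -/
import Mathlib

section
/- Let 0 < λ_2 < λ_1 < 1 and η = (η_1, η_2) with η_1, η_2 ≠ 0. Define α = (λ_1²η_1² + λ_2²η_2²)/(λ_1³η_1² + λ_2³η_2²) − 1 and η'_i = (1 − (1+α)λ_i) η_i for i = 1,2. Then η'_1/η'_2 = −(λ_2²/λ_1²)(η_2/η_1). -/
/-!
Over the common denominator `D = λ₁³η₁² + λ₂³η₂²`, the two update factors are
`1 - (1+α)λ₁ = λ₂²η₂²(λ₂ - λ₁)/D` and `1 - (1+α)λ₂ = λ₁²η₁²(λ₁ - λ₂)/D`; their quotient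
is `-λ₂²η₂²/(λ₁²η₁²)`, and multiplying by `η₁/η₂` gives the claim.
-/

/-- The exact line-search step `1 + α`, with `w₁, w₂` the squared eigencoordinates. -/
noncomputable def lineSearchStep (l₁ l₂ w₁ w₂ : ℝ) : ℝ :=
  (l₁ ^ 2 * w₁ + l₂ ^ 2 * w₂) / (l₁ ^ 3 * w₁ + l₂ ^ 3 * w₂)

lemma lineSearchStep_comm (l₁ l₂ w₁ w₂ : ℝ) :
    lineSearchStep l₁ l₂ w₁ w₂ = lineSearchStep l₂ l₁ w₂ w₁ := by
  unfold lineSearchStep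
  ring

lemma one_sub_lineSearchStep_mul {l₁ l₂ w₁ w₂ : ℝ} (hD : l₁ ^ 3 * w₁ + l₂ ^ 3 * w₂ ≠ 0) :
    1 - lineSearchStep l₁ l₂ w₁ w₂ * l₁ = l₂ ^ 2 * w₂ * (l₂ - l₁) / (l₁ ^ 3 * w₁ + l₂ ^ 3 * w₂) := by
  unfold lineSearchStep
  field_simp
  ring

lemma lineSearchStep_update_ratio {l₁ l₂ η₁ η₂ : ℝ} (hl₁ : l₁ ≠ 0) (hl : l₁ ≠ l₂)
    (h₁ : η₁ ≠ 0) (h₂ : η₂ ≠ 0) (hD : l₁ ^ 3 * η₁ ^ 2 + l₂ ^ 3 * η₂ ^ 2 ≠ 0) :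
    (1 - lineSearchStep l₁ l₂ (η₁ ^ 2) (η₂ ^ 2) * l₁) * η₁ /
        ((1 - lineSearchStep l₁ l₂ (η₁ ^ 2) (η₂ ^ 2) * l₂) * η₂) =
      -(l₂ ^ 2 / l₁ ^ 2) * (η₂ / η₁) := by
  have hD' : l₂ ^ 3 * η₂ ^ 2 + l₁ ^ 3 * η₁ ^ 2 ≠ 0 := by rwa [add_comm]
  rw [one_sub_lineSearchStep_mul hD, lineSearchStep_comm, one_sub_lineSearchStep_mul hD',
    add_comm (l₂ ^ 3 * η₂ ^ 2)]
  have hsub : l₁ - l₂ ≠ 0 := sub_ne_zero.2 hl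
  field_simp
  ring

/-- One SOR step in 2-d eigencoordinates flips and rescales the coordinate ratio:
`η'_1/η'_2 = −(λ_2²/λ_1²)(η_2/η_1)`. -/
theorem stmt_6 (l1 l2 η1 η2 : ℝ)
    (hl : 0 < l2 ∧ l2 < l1 ∧ l1 < 1) (h1 : η1 ≠ 0) (h2 : η2 ≠ 0)
    (α : ℝ)
    (hα : α = (l1^2*η1^2 + l2^2*η2^2) / (l1^3*η1^2 + l2^3*η2^2) - 1)
    (η1' η2' : ℝ)
    (h1' : η1' = (1 - (1+α)*l1) * η1) (h2' : η2' = (1 - (1+α)*l2) * η2) :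
    η1' / η2' = -(l2^2/l1^2) * (η2/η1) := by
  obtain ⟨hl2, hl21, -⟩ := hl
  have hl1 : 0 < l1 := hl2.trans hl21
  have hstep : 1 + α = lineSearchStep l1 l2 (η1 ^ 2) (η2 ^ 2) := by
    rw [hα, lineSearchStep]
    ring
  rw [h1', h2', hstep]
  exact lineSearchStep_update_ratio hl1.ne' hl21.ne' h1 h2 (by positivity)
end

section
/- Under the two-dimensional SOR recursion in eigencoordinates (with 0 < λ_2 < λ_1 < 1, initial coordinates η_0 with both components nonzero, α_t = (λ_1²η_{t−1,1}² + λ_2²η_{t−1,2}²)/(λ_1³η_{t−1,1}² + λ_2³η_{t−1,2}²) − 1 and η_{t,i} = (1−(1+α_t)λ_i)η_{t−1,i}), the relaxation factors satisfy α_{t} = α_{t−2} for all t ≥ 3. -/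
/-!
Write `Λ = diag(λ₁, λ₂)` and `s(η) = 1 + α`. The step length `s(η)` is chosen exactly so that
the new gradient `Λ η_{t+1}` is orthogonal to the old one `Λ η_t`. In the plane this forces
`Λ η_{t+2}` to be parallel to `Λ η_t`, i.e. `η_{t+2} = P η_t` with `P ≠ 0`, and `s` is invariant
under such rescaling; hence `α_{t+2} = α_t`. The coordinates never vanish because
`(1 - s λ₁) (λ₁³x² + λ₂³y²) = λ₂² y² (λ₂ - λ₁)`, and symmetrically for `1 - s λ₂`.
-/

/-- The SOR step length `1 + α` computed from the eigencoordinates `(x, y)`. -/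
noncomputable def sorStepLength (l1 l2 x y : ℝ) : ℝ :=
  (l1^2*x^2 + l2^2*y^2) / (l1^3*x^2 + l2^3*y^2)

section StepLength

variable {l1 l2 x y : ℝ}

lemma sorStepLength_comm : sorStepLength l1 l2 x y = sorStepLength l2 l1 y x := by
  rw [sorStepLength, sorStepLength, add_comm (l1^2*x^2), add_comm (l1^3*x^2)]

lemma sorStepLength_mul_mul {P : ℝ} (hP : P ≠ 0) :
    sorStepLength l1 l2 (P*x) (P*y) = sorStepLength l1 l2 x y := by
  have hnum : l1^2*(P*x)^2 + l2^2*(P*y)^2 = P^2 * (l1^2*x^2 + l2^2*y^2) := by ring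
  have hden : l1^3*(P*x)^2 + l2^3*(P*y)^2 = P^2 * (l1^3*x^2 + l2^3*y^2) := by ring
  rw [sorStepLength, sorStepLength, hnum, hden, mul_div_mul_left _ _ (pow_ne_zero 2 hP)]

lemma sorStepLength_denom_pos (hl1 : 0 < l1) (hl2 : 0 < l2) (hx : x ≠ 0) :
    0 < l1^3*x^2 + l2^3*y^2 := by
  positivity

lemma one_sub_sorStepLength_mul (hD : l1^3*x^2 + l2^3*y^2 ≠ 0) :
    1 - sorStepLength l1 l2 x y * l1 = l2^2*y^2*(l2 - l1) / (l1^3*x^2 + l2^3*y^2) := by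
  rw [sorStepLength]
  field_simp
  ring

lemma one_sub_sorStepLength_mul_ne_zero (hl1 : 0 < l1) (hl2 : 0 < l2) (hl : l1 ≠ l2)
    (hx : x ≠ 0) (hy : y ≠ 0) : 1 - sorStepLength l1 l2 x y * l1 ≠ 0 := by
  have hD := sorStepLength_denom_pos hl1 hl2 (y := y) hx
  rw [one_sub_sorStepLength_mul hD.ne']
  exact div_ne_zero (mul_ne_zero (by positivity) (sub_ne_zero.2 hl.symm)) hD.ne'

lemma sorStepLength_orthogonal (hD : l1^3*x^2 + l2^3*y^2 ≠ 0) :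
    l1^2 * x * ((1 - sorStepLength l1 l2 x y * l1) * x)
      + l2^2 * y * ((1 - sorStepLength l1 l2 x y * l2) * y) = 0 := by
  rw [sorStepLength]
  field_simp
  ring

end StepLength

lemma cross_eq_of_orthogonal_of_orthogonal {a b x y x' y' x'' y'' : ℝ} (ha : a ≠ 0)
    (hb : b ≠ 0) (hx' : x' ≠ 0) (hy' : y' ≠ 0) (h : a*x*x' + b*y*y' = 0)
    (h' : a*x'*x'' + b*y'*y'' = 0) : x*y'' = x''*y := by
  have hc : a*b*x'*y' ≠ 0 := by positivity
  refine sub_eq_zero.1 (mul_left_cancel₀ hc ?_)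
  linear_combination b*y'*y''*h - b*y*y'*h'

def IsSOROrbit (l1 l2 : ℝ) (η1 η2 : ℕ → ℝ) : Prop :=
  ∀ t, η1 (t+1) = (1 - sorStepLength l1 l2 (η1 t) (η2 t) * l1) * η1 t ∧
    η2 (t+1) = (1 - sorStepLength l1 l2 (η1 t) (η2 t) * l2) * η2 t

namespace IsSOROrbit

variable {l1 l2 : ℝ} {η1 η2 : ℕ → ℝ}

lemma ne_zero (hη : IsSOROrbit l1 l2 η1 η2) (hl1 : 0 < l1) (hl2 : 0 < l2) (hl : l1 ≠ l2)
    (h01 : η1 0 ≠ 0) (h02 : η2 0 ≠ 0) (t : ℕ) : η1 t ≠ 0 ∧ η2 t ≠ 0 := by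
  induction t with
  | zero => exact ⟨h01, h02⟩
  | succ t ih =>
    obtain ⟨hx, hy⟩ := ih
    rw [(hη t).1, (hη t).2]
    refine ⟨mul_ne_zero (one_sub_sorStepLength_mul_ne_zero hl1 hl2 hl hx hy) hx, ?_⟩
    rw [sorStepLength_comm]
    exact mul_ne_zero (one_sub_sorStepLength_mul_ne_zero hl2 hl1 (Ne.symm hl) hy hx) hy

lemma orthogonal (hη : IsSOROrbit l1 l2 η1 η2) (hl1 : 0 < l1) (hl2 : 0 < l2) {t : ℕ}
    (hx : η1 t ≠ 0) : l1^2 * η1 t * η1 (t+1) + l2^2 * η2 t * η2 (t+1) = 0 := by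
  rw [(hη t).1, (hη t).2]
  exact sorStepLength_orthogonal (sorStepLength_denom_pos hl1 hl2 hx).ne'

lemma sorStepLength_add_two (hη : IsSOROrbit l1 l2 η1 η2) (hl1 : 0 < l1) (hl2 : 0 < l2)
    (hl : l1 ≠ l2) (h01 : η1 0 ≠ 0) (h02 : η2 0 ≠ 0) (t : ℕ) :
    sorStepLength l1 l2 (η1 (t+2)) (η2 (t+2)) = sorStepLength l1 l2 (η1 t) (η2 t) := by
  have hne := hη.ne_zero hl1 hl2 hl h01 h02
  have hcross : η1 t * η2 (t+2) = η1 (t+2) * η2 t :=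
    cross_eq_of_orthogonal_of_orthogonal (by positivity) (by positivity)
      (hne (t+1)).1 (hne (t+1)).2 (hη.orthogonal hl1 hl2 (hne t).1)
      (hη.orthogonal hl1 hl2 (hne (t+1)).1)
  set P := η1 (t+2) / η1 t
  have h1 : η1 (t+2) = P * η1 t := (div_mul_cancel₀ _ (hne t).1).symm
  have h2 : η2 (t+2) = P * η2 t := by
    rw [div_mul_eq_mul_div, ← hcross, mul_div_cancel_left₀ _ (hne t).1]
  rw [h1, h2, sorStepLength_mul_mul (div_ne_zero (hne (t+2)).1 (hne t).1)]

end IsSOROrbit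

/-- In the two-dimensional SOR recursion the relaxation factors satisfy
`α_t = α_{t−2}` for all `t ≥ 3`. -/
theorem stmt_7 (l1 l2 : ℝ) (hl : 0 < l2 ∧ l2 < l1 ∧ l1 < 1)
    (η1 η2 : ℕ → ℝ) (α : ℕ → ℝ)
    (h01 : η1 0 ≠ 0) (h02 : η2 0 ≠ 0)
    (hα : ∀ t : ℕ, α (t+1) =
      (l1^2*(η1 t)^2 + l2^2*(η2 t)^2) / (l1^3*(η1 t)^2 + l2^3*(η2 t)^2) - 1)
    (hr1 : ∀ t : ℕ, η1 (t+1) = (1 - (1 + α (t+1))*l1) * η1 t)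
    (hr2 : ∀ t : ℕ, η2 (t+1) = (1 - (1 + α (t+1))*l2) * η2 t) :
    ∀ t : ℕ, 3 ≤ t → α t = α (t - 2) := by
  obtain ⟨hl2, hl21, -⟩ := hl
  have hstep (t : ℕ) : 1 + α (t+1) = sorStepLength l1 l2 (η1 t) (η2 t) := by
    rw [hα t, sorStepLength]; ring
  have hη : IsSOROrbit l1 l2 η1 η2 := fun t => by
    rw [hr1 t, hr2 t, hstep t]
    exact ⟨rfl, rfl⟩
  intro t ht
  obtain ⟨s, rfl⟩ := Nat.exists_eq_add_of_le' ht
  have hperiod := hη.sorStepLength_add_two (hl2.trans hl21) hl2 hl21.ne' h01 h02 s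
  rw [show s + 3 - 2 = s + 1 by omega, show s + 3 = (s + 2) + 1 by omega]
  linarith [hstep (s+2), hstep s]
end

section
/- Let 0 < λ_2 < λ_1 < 1 and η_1, η_2 ≠ 0; let α_{t−1}, α_t be the SOR relaxation factors at two successive steps starting from η = (η_1, η_2). Then for j = 1,2, the product of contraction factors satisfies [1−(1+α_t)λ_j][1−(1+α_{t−1})λ_j] = (λ_1−λ_2)² / [λ_1² + λ_2² + λ_1λ_2((λ_1²/λ_2²)(η_1²/η_2²) + (λ_2²/λ_1²)(η_2²/η_1²))], and this value is the same for j = 1 and j = 2. -/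
/-!
In eigencoordinates only the squared weights `wᵢ = ηᵢ²` matter, and the step size `1 + α` is a
ratio of two linear forms in them, hence invariant under rescaling the weights. One SOR step
sends the weights `(w₁, w₂)` to a common multiple of `(λ₂⁴ w₂, λ₁⁴ w₁)`, so the second step size
has a closed form, and multiplying out the two contraction factors gives the same expression
`(λ₁ - λ₂)² λ₁ λ₂ w₁ w₂ / ((λ₁ w₁ + λ₂ w₂)(λ₁³ w₁ + λ₂³ w₂))` in both directions.
-/

/-- The SOR step size `1 + α` for eigenvalues `a, b` and squared eigencoordinates `w₁, w₂`. -/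
noncomputable def sorStepSize (a b w₁ w₂ : ℝ) : ℝ :=
  (a ^ 2 * w₁ + b ^ 2 * w₂) / (a ^ 3 * w₁ + b ^ 3 * w₂)

namespace sorStepSize

variable {a b w₁ w₂ : ℝ}

theorem swap (a b w₁ w₂ : ℝ) : sorStepSize a b w₁ w₂ = sorStepSize b a w₂ w₁ := by
  simp only [sorStepSize, add_comm]

theorem smul {κ : ℝ} (hκ : κ ≠ 0) (a b w₁ w₂ : ℝ) :
    sorStepSize a b (κ * w₁) (κ * w₂) = sorStepSize a b w₁ w₂ := by
  unfold sorStepSize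
  rw [show a ^ 2 * (κ * w₁) + b ^ 2 * (κ * w₂) = κ * (a ^ 2 * w₁ + b ^ 2 * w₂) by ring,
    show a ^ 3 * (κ * w₁) + b ^ 3 * (κ * w₂) = κ * (a ^ 3 * w₁ + b ^ 3 * w₂) by ring,
    mul_div_mul_left _ _ hκ]

theorem one_sub_mul_left (hD : a ^ 3 * w₁ + b ^ 3 * w₂ ≠ 0) :
    1 - sorStepSize a b w₁ w₂ * a = b ^ 2 * w₂ * (b - a) / (a ^ 3 * w₁ + b ^ 3 * w₂) := by
  unfold sorStepSize
  field_simp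
  ring

theorem one_sub_mul_right (hD : a ^ 3 * w₁ + b ^ 3 * w₂ ≠ 0) :
    1 - sorStepSize a b w₁ w₂ * b = a ^ 2 * w₁ * (a - b) / (a ^ 3 * w₁ + b ^ 3 * w₂) := by
  rw [swap, one_sub_mul_left (by rwa [add_comm]), add_comm]

/-- After one step the weights become `κ (b⁴ w₂, a⁴ w₁)` with
`κ = w₁ w₂ (a - b)² / (a³ w₁ + b³ w₂)²`. -/
theorem after_step (ha : 0 < a) (hb : 0 < b) (hw₁ : 0 < w₁) (hw₂ : 0 < w₂)
    (hab : a ≠ b) :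
    sorStepSize a b ((1 - sorStepSize a b w₁ w₂ * a) ^ 2 * w₁)
        ((1 - sorStepSize a b w₁ w₂ * b) ^ 2 * w₂) =
      sorStepSize a b (b ^ 4 * w₂) (a ^ 4 * w₁) := by
  have hκ : w₁ * w₂ * (a - b) ^ 2 / (a ^ 3 * w₁ + b ^ 3 * w₂) ^ 2 ≠ 0 := by
    have : a - b ≠ 0 := sub_ne_zero.mpr hab
    positivity
  rw [← smul hκ a b (b ^ 4 * w₂), one_sub_mul_left (by positivity),
    one_sub_mul_right (by positivity)]
  congr 1
  · field_simp; ring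
  · field_simp

theorem two_step_left (ha : 0 < a) (hb : 0 < b) (hw₁ : 0 < w₁) (hw₂ : 0 < w₂)
    (hab : a ≠ b) :
    (1 - sorStepSize a b ((1 - sorStepSize a b w₁ w₂ * a) ^ 2 * w₁)
        ((1 - sorStepSize a b w₁ w₂ * b) ^ 2 * w₂) * a) * (1 - sorStepSize a b w₁ w₂ * a) =
      (a - b) ^ 2 * a * b * w₁ * w₂ / ((a * w₁ + b * w₂) * (a ^ 3 * w₁ + b ^ 3 * w₂)) := by
  rw [after_step ha hb hw₁ hw₂ hab, one_sub_mul_left (by positivity),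
    one_sub_mul_left (by positivity)]
  field_simp
  ring

theorem two_step_right (ha : 0 < a) (hb : 0 < b) (hw₁ : 0 < w₁) (hw₂ : 0 < w₂)
    (hab : a ≠ b) :
    (1 - sorStepSize a b ((1 - sorStepSize a b w₁ w₂ * a) ^ 2 * w₁)
        ((1 - sorStepSize a b w₁ w₂ * b) ^ 2 * w₂) * b) * (1 - sorStepSize a b w₁ w₂ * b) =
      (a - b) ^ 2 * a * b * w₁ * w₂ / ((a * w₁ + b * w₂) * (a ^ 3 * w₁ + b ^ 3 * w₂)) := by
  simp only [swap a b]
  rw [two_step_left hb ha hw₂ hw₁ hab.symm]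
  ring

theorem two_step_eq (ha : 0 < a) (hb : 0 < b) (hw₁ : 0 < w₁) (hw₂ : 0 < w₂) :
    (a - b) ^ 2 * a * b * w₁ * w₂ / ((a * w₁ + b * w₂) * (a ^ 3 * w₁ + b ^ 3 * w₂)) =
      (a - b) ^ 2 / (a ^ 2 + b ^ 2 + a * b * ((a ^ 2 / b ^ 2) * (w₁ / w₂) +
        (b ^ 2 / a ^ 2) * (w₂ / w₁))) := by
  field_simp
  ring

end sorStepSize

/-- Two successive SOR contraction factors multiply to the same value in both
eigendirections, given by the stated closed form. -/
theorem stmt_9 (l1 l2 η1 η2 : ℝ)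
    (hl : 0 < l2 ∧ l2 < l1 ∧ l1 < 1) (h1 : η1 ≠ 0) (h2 : η2 ≠ 0)
    (αprev : ℝ)
    (hαprev : αprev = (l1^2*η1^2 + l2^2*η2^2) / (l1^3*η1^2 + l2^3*η2^2) - 1)
    (η1' η2' : ℝ)
    (h1' : η1' = (1 - (1+αprev)*l1) * η1) (h2' : η2' = (1 - (1+αprev)*l2) * η2)
    (αt : ℝ)
    (hαt : αt = (l1^2*η1'^2 + l2^2*η2'^2) / (l1^3*η1'^2 + l2^3*η2'^2) - 1) :
    ((1 - (1+αt)*l1) * (1 - (1+αprev)*l1) =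
      (l1 - l2)^2 / (l1^2 + l2^2 + l1*l2*((l1^2/l2^2)*(η1^2/η2^2) + (l2^2/l1^2)*(η2^2/η1^2)))) ∧
    ((1 - (1+αt)*l2) * (1 - (1+αprev)*l2) =
      (l1 - l2)^2 / (l1^2 + l2^2 + l1*l2*((l1^2/l2^2)*(η1^2/η2^2) + (l2^2/l1^2)*(η2^2/η1^2)))) := by
  obtain ⟨hl2, hl21, -⟩ := hl
  have hl1 : 0 < l1 := hl2.trans hl21
  have hw1 : 0 < η1 ^ 2 := by positivity
  have hw2 : 0 < η2 ^ 2 := by positivity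
  have hprev : 1 + αprev = sorStepSize l1 l2 (η1 ^ 2) (η2 ^ 2) := by
    rw [hαprev, sorStepSize]; ring
  have ht : 1 + αt = sorStepSize l1 l2 ((1 - (1 + αprev) * l1) ^ 2 * η1 ^ 2)
      ((1 - (1 + αprev) * l2) ^ 2 * η2 ^ 2) := by
    rw [hαt, sorStepSize, h1', h2']; ring
  rw [ht, hprev, ← sorStepSize.two_step_eq hl1 hl2 hw1 hw2]
  exact ⟨sorStepSize.two_step_left hl1 hl2 hw1 hw2 hl21.ne',
    sorStepSize.two_step_right hl1 hl2 hw1 hw2 hl21.ne'⟩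
end

section
/- Under the two-dimensional SOR recursion (0 < λ_2 < λ_1 < 1, eigencoordinates η_t with both components of η_0 nonzero), the ratio η_{t,1}/η_{t,2} satisfies η_{t,1}/η_{t,2} = η_{t−2,1}/η_{t−2,2} for all t ≥ 2; hence the odd-indexed iterates θ̃_1, θ̃_3, θ̃_5, ... lie on a single line through the MLE θ̂, and the even-indexed iterates lie on another line through θ̂. -/
/-!
The exact step `1 + α = S₂ / S₃` with `Sₖ = λ₁ᵏ η₁² + λ₂ᵏ η₂²` is chosen so that the new error
`η_{t+1}` is orthogonal to `η_t` for the inner product weighted by `diag(λ₁², λ₂²)`. It also keeps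
every coordinate nonzero, since `1 - (S₂ / S₃) λ₁ = λ₂² η₂² (λ₂ - λ₁) / S₃`. In the plane, `η_t`
and `η_{t+2}` are then both orthogonal to the nonzero vector `η_{t+1}`, hence parallel, and `P`
carries this to `θ̂ - θ̃_t` and `θ̂ - θ̃_{t+2}`.
-/

/-- The factor `1 + α` of the SOR step taken from the eigencoordinates `(x, y)`. -/
noncomputable def sorRate (a b x y : ℝ) : ℝ :=
  (a ^ 2 * x ^ 2 + b ^ 2 * y ^ 2) / (a ^ 3 * x ^ 2 + b ^ 3 * y ^ 2)

lemma sorRate_comm (a b x y : ℝ) : sorRate b a y x = sorRate a b x y := by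
  simp only [sorRate, add_comm]

lemma one_sub_sorRate_mul {a b x y : ℝ} (h : a ^ 3 * x ^ 2 + b ^ 3 * y ^ 2 ≠ 0) :
    1 - sorRate a b x y * a = b ^ 2 * y ^ 2 * (b - a) / (a ^ 3 * x ^ 2 + b ^ 3 * y ^ 2) := by
  rw [sorRate]
  field_simp
  ring

lemma one_sub_sorRate_mul_ne_zero {a b x y : ℝ} (ha : 0 < a) (hb : 0 < b) (hab : a ≠ b)
    (hy : y ≠ 0) : 1 - sorRate a b x y * a ≠ 0 := by
  have hS : 0 < a ^ 3 * x ^ 2 + b ^ 3 * y ^ 2 := by positivity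
  rw [one_sub_sorRate_mul hS.ne']
  exact div_ne_zero (mul_ne_zero (by positivity) (sub_ne_zero.2 hab.symm)) hS.ne'

lemma sorRate_step_orthogonal {a b x y : ℝ} (h : a ^ 3 * x ^ 2 + b ^ 3 * y ^ 2 ≠ 0) :
    a ^ 2 * x * ((1 - sorRate a b x y * a) * x) + b ^ 2 * y * ((1 - sorRate a b x y * b) * y)
      = 0 := by
  rw [sorRate]
  field_simp
  ring

lemma mul_eq_mul_of_weighted_orthogonal {a b u₁ u₂ v₁ v₂ w₁ w₂ : ℝ} (hv : a * v₁ ≠ 0)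
    (hu : a * u₁ * v₁ + b * u₂ * v₂ = 0) (hw : a * v₁ * w₁ + b * v₂ * w₂ = 0) :
    w₁ * u₂ = u₁ * w₂ :=
  mul_left_cancel₀ hv (by linear_combination u₂ * hw - w₂ * hu)

lemma vec2_eq_div_smul_of_mul_eq {x y x' y' : ℝ} (hy : y ≠ 0) (h : x' * y = x * y') :
    ![x', y'] = (y' / y) • ![x, y] := by
  ext i
  fin_cases i
  · simp only [Fin.zero_eta, Matrix.cons_val_zero, Pi.smul_apply, smul_eq_mul]
    field_simp
    linear_combination h
  · simp only [Fin.mk_one, Matrix.cons_val_one, Matrix.cons_val_zero, Pi.smul_apply,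
      smul_eq_mul]
    field_simp

theorem stmt_12_general (l1 l2 : ℝ) (hl : 0 < l2 ∧ l2 < l1 ∧ l1 < 1)
    (η1 η2 : ℕ → ℝ) (α : ℕ → ℝ)
    (h01 : η1 0 ≠ 0) (h02 : η2 0 ≠ 0)
    (hα : ∀ t : ℕ, α (t+1) =
      (l1^2*(η1 t)^2 + l2^2*(η2 t)^2) / (l1^3*(η1 t)^2 + l2^3*(η2 t)^2) - 1)
    (hr1 : ∀ t : ℕ, η1 (t+1) = (1 - (1 + α (t+1))*l1) * η1 t)
    (hr2 : ∀ t : ℕ, η2 (t+1) = (1 - (1 + α (t+1))*l2) * η2 t)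
    (P : Matrix (Fin 2) (Fin 2) ℝ)
    (θhat : Fin 2 → ℝ) (θ : ℕ → Fin 2 → ℝ)
    (hθ : ∀ t : ℕ, θhat - θ t = P.mulVec ![η1 t, η2 t]) :
    ∀ t : ℕ, η1 (t+2) / η2 (t+2) = η1 t / η2 t ∧
      ∃ c : ℝ, θhat - θ (t+2) = c • (θhat - θ t) := by
  obtain ⟨hl2, hl21, -⟩ := hl
  have hl1 : 0 < l1 := hl2.trans hl21
  have hrate : ∀ t, 1 + α (t+1) = sorRate l1 l2 (η1 t) (η2 t) := fun t => by
    rw [hα, add_sub_cancel, sorRate]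
  have hne : ∀ t, η1 t ≠ 0 ∧ η2 t ≠ 0 := by
    intro t
    induction t with
    | zero => exact ⟨h01, h02⟩
    | succ t ih =>
      rw [hr1, hr2, hrate]
      constructor
      · exact mul_ne_zero (one_sub_sorRate_mul_ne_zero hl1 hl2 hl21.ne' ih.2) ih.1
      · rw [← sorRate_comm]
        exact mul_ne_zero (one_sub_sorRate_mul_ne_zero hl2 hl1 hl21.ne ih.1) ih.2
  have horth : ∀ t, l1^2 * η1 t * η1 (t+1) + l2^2 * η2 t * η2 (t+1) = 0 := fun t => by
    have h1 := (hne t).1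
    rw [hr1, hr2, hrate]
    exact sorRate_step_orthogonal (by positivity)
  have hcross : ∀ t, η1 (t+2) * η2 t = η1 t * η2 (t+2) := fun t =>
    mul_eq_mul_of_weighted_orthogonal (mul_ne_zero (by positivity) (hne (t+1)).1)
      (horth t) (horth (t+1))
  intro t
  refine ⟨(div_eq_div_iff (hne (t+2)).2 (hne t).2).2 (hcross t), η2 (t+2) / η2 t, ?_⟩
  rw [hθ, hθ, vec2_eq_div_smul_of_mul_eq (hne t).2 (hcross t), Matrix.mulVec_smul]

/-- In the two-dimensional SOR recursion the coordinate ratio is 2-periodic,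
so same-parity iterates are collinear with the MLE `θ̂`. -/
theorem stmt_12 (l1 l2 : ℝ) (hl : 0 < l2 ∧ l2 < l1 ∧ l1 < 1)
    (η1 η2 : ℕ → ℝ) (α : ℕ → ℝ)
    (h01 : η1 0 ≠ 0) (h02 : η2 0 ≠ 0)
    (hα : ∀ t : ℕ, α (t+1) =
      (l1^2*(η1 t)^2 + l2^2*(η2 t)^2) / (l1^3*(η1 t)^2 + l2^3*(η2 t)^2) - 1)
    (hr1 : ∀ t : ℕ, η1 (t+1) = (1 - (1 + α (t+1))*l1) * η1 t)
    (hr2 : ∀ t : ℕ, η2 (t+1) = (1 - (1 + α (t+1))*l2) * η2 t)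
    (P : Matrix (Fin 2) (Fin 2) ℝ) (hP : IsUnit P.det)
    (θhat : Fin 2 → ℝ) (θ : ℕ → Fin 2 → ℝ)
    (hθ : ∀ t : ℕ, θhat - θ t = P.mulVec ![η1 t, η2 t]) :
    ∀ t : ℕ, η1 (t+2) / η2 (t+2) = η1 t / η2 t ∧
      ∃ c : ℝ, θhat - θ (t+2) = c • (θhat - θ t) :=
  stmt_12_general l1 l2 hl η1 η2 α h01 h02 hα hr1 hr2 P θhat θ hθ
end

section
/- Under the two-dimensional SOR recursion with 0 < λ_2 < λ_1 < 1 and η_{0,1}, η_{0,2} ≠ 0, the signs alternate in the first coordinate and are preserved in the second: η_{t,1}·η_{t−1,1} < 0 and η_{t,2}·η_{t−1,2} > 0 for all t ≥ 1. -/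
/-! The exact line-search step `c = (λ₁²w₁ + λ₂²w₂) / (λ₁³w₁ + λ₂³w₂)`, with weights `wᵢ = ηᵢ²`,
is the average of `1/λ₁` and `1/λ₂` with positive weights `λᵢ³wᵢ`, so it lies strictly between them.
Hence the SOR factor `1 - c λ₁` is negative and `1 - c λ₂` is positive, so both coordinates stay
nonzero and the first flips sign at every step while the second keeps it. -/

section LineSearch

variable {l1 l2 w1 w2 : ℝ}

lemma one_div_lt_lineSearchStep (hl2 : 0 < l2) (hl : l2 < l1) (hw1 : 0 < w1) (hw2 : 0 < w2) :
    1 / l1 < (l1^2*w1 + l2^2*w2) / (l1^3*w1 + l2^3*w2) := by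
  have hl1 : 0 < l1 := hl2.trans hl
  rw [div_lt_div_iff₀ hl1 (by positivity)]
  nlinarith [mul_pos (mul_pos (pow_pos hl2 2) hw2) (mul_pos hl1 (sub_pos.2 hl))]

lemma lineSearchStep_lt_one_div (hl2 : 0 < l2) (hl : l2 < l1) (hw1 : 0 < w1) (hw2 : 0 < w2) :
    (l1^2*w1 + l2^2*w2) / (l1^3*w1 + l2^3*w2) < 1 / l2 := by
  have hl1 : 0 < l1 := hl2.trans hl
  rw [div_lt_div_iff₀ (by positivity) hl2]
  nlinarith [mul_pos (mul_pos (pow_pos hl1 2) hw1) (mul_pos hl2 (sub_pos.2 hl))]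

lemma one_sub_lineSearchStep_mul_signs (hl2 : 0 < l2) (hl : l2 < l1) (hw1 : 0 < w1) (hw2 : 0 < w2) :
    1 - (l1^2*w1 + l2^2*w2) / (l1^3*w1 + l2^3*w2) * l1 < 0 ∧
      0 < 1 - (l1^2*w1 + l2^2*w2) / (l1^3*w1 + l2^3*w2) * l2 := by
  have h1 := (div_lt_iff₀ (hl2.trans hl)).1 (one_div_lt_lineSearchStep hl2 hl hw1 hw2)
  have h2 := (lt_div_iff₀ hl2).1 (lineSearchStep_lt_one_div hl2 hl hw1 hw2)
  constructor <;> linarith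

end LineSearch

/-- SOR zigzags: the first eigencoordinate alternates sign at every step,
while the second keeps its sign. -/
theorem stmt_13 (l1 l2 : ℝ) (hl : 0 < l2 ∧ l2 < l1 ∧ l1 < 1)
    (η1 η2 : ℕ → ℝ) (α : ℕ → ℝ)
    (h01 : η1 0 ≠ 0) (h02 : η2 0 ≠ 0)
    (hα : ∀ t : ℕ, α (t+1) =
      (l1^2*(η1 t)^2 + l2^2*(η2 t)^2) / (l1^3*(η1 t)^2 + l2^3*(η2 t)^2) - 1)
    (hr1 : ∀ t : ℕ, η1 (t+1) = (1 - (1 + α (t+1))*l1) * η1 t)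
    (hr2 : ∀ t : ℕ, η2 (t+1) = (1 - (1 + α (t+1))*l2) * η2 t) :
    ∀ t : ℕ, η1 (t+1) * η1 t < 0 ∧ 0 < η2 (t+1) * η2 t := by
  obtain ⟨hl2, hl, -⟩ := hl
  have factors (t : ℕ) (h1 : η1 t ≠ 0) (h2 : η2 t ≠ 0) :
      1 - (1 + α (t+1))*l1 < 0 ∧ 0 < 1 - (1 + α (t+1))*l2 := by
    rw [hα, add_sub_cancel]
    exact one_sub_lineSearchStep_mul_signs hl2 hl (sq_pos_of_ne_zero h1) (sq_pos_of_ne_zero h2)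
  have nonzero (t : ℕ) : η1 t ≠ 0 ∧ η2 t ≠ 0 := by
    induction t with
    | zero => exact ⟨h01, h02⟩
    | succ t ih =>
      obtain ⟨f1, f2⟩ := factors t ih.1 ih.2
      rw [hr1, hr2]
      exact ⟨mul_ne_zero f1.ne ih.1, mul_ne_zero f2.ne' ih.2⟩
  intro t
  obtain ⟨n1, n2⟩ := nonzero t
  obtain ⟨f1, f2⟩ := factors t n1 n2
  rw [hr1, hr2, mul_assoc, mul_assoc, ← sq, ← sq]
  exact ⟨mul_neg_of_neg_of_pos f1 (sq_pos_of_ne_zero n1), mul_pos f2 (sq_pos_of_ne_zero n2)⟩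
end

section
/- Let 0 < λ_2 < λ_1 < 1 and let M(α) = diag(1−(1+α)λ_1, 1−(1+α)λ_2). If α_{t−1}, α_t are two successive SOR relaxation factors generated from a state η with both components nonzero, then M(α_t)·M(α_{t−1}) = c·I_2 where c = [1−(1+α_t)λ_1][1−(1+α_{t−1})λ_1], i.e., the composition of two successive SOR steps is a scalar multiple of the identity in eigencoordinates. -/
/-!
Writing `D(η) = λ₁³η₁² + λ₂³η₂²`, the relaxation factor `α(η)` makes the two contraction factors
`1 - (1 + α)λ₁ = (λ₂ - λ₁)λ₂²η₂² / D(η)` and `1 - (1 + α)λ₂ = (λ₁ - λ₂)λ₁²η₁² / D(η)`: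
each is governed by the *other* coordinate. After one step `η₂'² = (1 - (1 + α)λ₂)² η₂²`, so the
ratio of the two factors at the next step is the inverse of the ratio at the current one, and the
products over the two steps agree.
-/

noncomputable def sorAlpha (l1 l2 η1 η2 : ℝ) : ℝ :=
  (l1^2*η1^2 + l2^2*η2^2) / (l1^3*η1^2 + l2^3*η2^2) - 1

section

variable {l1 l2 η1 η2 : ℝ}

theorem sorAlpha_comm (l1 l2 η1 η2 : ℝ) : sorAlpha l1 l2 η1 η2 = sorAlpha l2 l1 η2 η1 := by
  simp only [sorAlpha, add_comm]

theorem one_sub_one_add_sorAlpha_mul_left (hD : l1^3*η1^2 + l2^3*η2^2 ≠ 0) :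
    1 - (1 + sorAlpha l1 l2 η1 η2) * l1 = (l2 - l1) * l2^2 * η2^2 / (l1^3*η1^2 + l2^3*η2^2) := by
  rw [sorAlpha]
  field_simp
  ring

theorem one_sub_one_add_sorAlpha_mul_right (hD : l1^3*η1^2 + l2^3*η2^2 ≠ 0) :
    1 - (1 + sorAlpha l1 l2 η1 η2) * l2 = (l1 - l2) * l1^2 * η1^2 / (l1^3*η1^2 + l2^3*η2^2) := by
  rw [sorAlpha_comm, add_comm (l1^3*η1^2)]
  exact one_sub_one_add_sorAlpha_mul_left (by rwa [add_comm])

theorem sorAlpha_factor_balance (hD : l1^3*η1^2 + l2^3*η2^2 ≠ 0) :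
    (l1 - l2) * l1^2 * η1^2 * (1 - (1 + sorAlpha l1 l2 η1 η2) * l1) =
      (l2 - l1) * l2^2 * η2^2 * (1 - (1 + sorAlpha l1 l2 η1 η2) * l2) := by
  rw [one_sub_one_add_sorAlpha_mul_left hD, one_sub_one_add_sorAlpha_mul_right hD]
  ring

theorem sorAlpha_two_step_factors_eq (hD : l1^3*η1^2 + l2^3*η2^2 ≠ 0)
    {η1' η2' : ℝ} (h1' : η1' = (1 - (1 + sorAlpha l1 l2 η1 η2) * l1) * η1)
    (h2' : η2' = (1 - (1 + sorAlpha l1 l2 η1 η2) * l2) * η2)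
    (hD' : l1^3*η1'^2 + l2^3*η2'^2 ≠ 0) :
    (1 - (1 + sorAlpha l1 l2 η1' η2') * l1) * (1 - (1 + sorAlpha l1 l2 η1 η2) * l1) =
      (1 - (1 + sorAlpha l1 l2 η1' η2') * l2) * (1 - (1 + sorAlpha l1 l2 η1 η2) * l2) := by
  set p := 1 - (1 + sorAlpha l1 l2 η1 η2) * l1
  set q := 1 - (1 + sorAlpha l1 l2 η1 η2) * l2
  have hbalance : (l1 - l2) * l1^2 * η1^2 * p = (l2 - l1) * l2^2 * η2^2 * q :=
    sorAlpha_factor_balance hD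
  rw [one_sub_one_add_sorAlpha_mul_left hD', one_sub_one_add_sorAlpha_mul_right hD',
    div_mul_eq_mul_div, div_mul_eq_mul_div, div_left_inj' hD', h1', h2']
  linear_combination -p * q * hbalance

end

/-- The composition of two successive SOR steps is a scalar multiple of the
identity in eigencoordinates. -/
theorem stmt_17 (l1 l2 η1 η2 : ℝ)
    (hl : 0 < l2 ∧ l2 < l1 ∧ l1 < 1) (h1 : η1 ≠ 0) (h2 : η2 ≠ 0)
    (M : ℝ → Matrix (Fin 2) (Fin 2) ℝ)
    (hM : ∀ a : ℝ, M a = Matrix.diagonal ![1 - (1+a)*l1, 1 - (1+a)*l2])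
    (αprev : ℝ)
    (hαprev : αprev = (l1^2*η1^2 + l2^2*η2^2) / (l1^3*η1^2 + l2^3*η2^2) - 1)
    (η1' η2' : ℝ)
    (h1' : η1' = (1 - (1+αprev)*l1) * η1) (h2' : η2' = (1 - (1+αprev)*l2) * η2)
    (αt : ℝ)
    (hαt : αt = (l1^2*η1'^2 + l2^2*η2'^2) / (l1^3*η1'^2 + l2^3*η2'^2) - 1) :
    M αt * M αprev =
      ((1 - (1+αt)*l1) * (1 - (1+αprev)*l1)) • (1 : Matrix (Fin 2) (Fin 2) ℝ) := by
  obtain ⟨hl2, hl21, -⟩ := hl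
  have hl1 : 0 < l1 := hl2.trans hl21
  replace hαprev : αprev = sorAlpha l1 l2 η1 η2 := hαprev
  replace hαt : αt = sorAlpha l1 l2 η1' η2' := hαt
  subst hαprev hαt
  have hD : l1^3*η1^2 + l2^3*η2^2 ≠ 0 := by positivity
  have hη2' : η2' ≠ 0 := by
    rw [h2', one_sub_one_add_sorAlpha_mul_right hD]
    have : l1 - l2 ≠ 0 := sub_ne_zero.2 hl21.ne'
    positivity
  have hD' : l1^3*η1'^2 + l2^3*η2'^2 ≠ 0 := by positivity
  have hfactors := sorAlpha_two_step_factors_eq hD h1' h2' hD'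
  rw [hM, hM, Matrix.diagonal_mul_diagonal, Matrix.smul_one_eq_diagonal]
  congr 1
  ext i
  fin_cases i
  · rfl
  · exact hfactors.symm
end
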